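/- arXiv:2311.12899 — 2 statements merged into one kernel-verified Lean document; each statement's English description precedes it below -/
import Mathlib

section
/- Let w ∈ F_d and let γ be any anti-automorphism of F_d. Then w is chiral (there exists a group G with G_w ≠ G_{w⁻¹}) if and only if w is γ-chiral (there exists a group G with G_w ≠ G_{γ(w)}). -/
/-- `f` is an anti-automorphism of the group `G`. -/
def IsAntiAut {G : Type*} [Group G] (f : G → G) : Prop :=
  Function.Bijective f ∧ ∀ a b : G, f (a * b) = f b * f a

/-- The image of the word map of `w` on `G`, with the group structure given explicitly. -/
def wordImage {d : ℕ} (G : Type) (inst : Group G) (w : FreeGroup (Fin d)) : Set G :=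
  letI := inst
  Set.range fun g : Fin d → G => (FreeGroup.lift g) w

/-- `w` is chiral: some group `G` has `G_w ≠ G_{w⁻¹}`. -/
def IsChiralWord {d : ℕ} (w : FreeGroup (Fin d)) : Prop :=
  ∃ (G : Type) (inst : Group G), wordImage G inst w ≠ wordImage G inst w⁻¹

/-- `w` is `γ`-chiral: some group `G` has `G_w ≠ G_{γ(w)}`. -/
def IsGammaChiralWord {d : ℕ} (γ : FreeGroup (Fin d) → FreeGroup (Fin d))
    (w : FreeGroup (Fin d)) : Prop :=
  ∃ (G : Type) (inst : Group G), wordImage G inst w ≠ wordImage G inst (γ w)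

lemma wordImage_hom_subset {d : ℕ} (G : Type) (inst : Group G)
    (φ : FreeGroup (Fin d) →* FreeGroup (Fin d)) (u : FreeGroup (Fin d)) :
    wordImage G inst (φ u) ⊆ wordImage G inst u := by
  letI := inst
  rintro x ⟨g, rfl⟩
  refine ⟨fun i => FreeGroup.lift g (φ (FreeGroup.of i)), ?_⟩
  have h : (FreeGroup.lift g).comp φ =
      FreeGroup.lift (fun i => FreeGroup.lift g (φ (FreeGroup.of i))) := by
    ext i; simp
  simpa using (DFunLike.congr_fun h u).symm

lemma wordImage_gamma {d : ℕ} (γ : FreeGroup (Fin d) → FreeGroup (Fin d))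
    (hγ : IsAntiAut γ) (G : Type) (inst : Group G) (w : FreeGroup (Fin d)) :
    wordImage G inst (γ w) = wordImage G inst w⁻¹ := by
  have hb : Function.Bijective (fun u : FreeGroup (Fin d) => (γ u)⁻¹) :=
    inv_involutive.bijective.comp hγ.1
  let φ : FreeGroup (Fin d) →* FreeGroup (Fin d) :=
    MonoidHom.mk' (fun u => (γ u)⁻¹) (fun a b => by
      simp [hγ.2, mul_inv_rev])
  let e : FreeGroup (Fin d) ≃* FreeGroup (Fin d) := MulEquiv.ofBijective φ hb
  have h1 : φ w⁻¹ = γ w := by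
    have := map_inv φ w
    simp only [φ, MonoidHom.mk'_apply] at this ⊢
    rw [this, inv_inv]
  have h2 : w⁻¹ = e.symm.toMonoidHom (γ w) := by
    have : e w⁻¹ = γ w := h1
    simp [← this]
  apply Set.Subset.antisymm
  · rw [← h1]; exact wordImage_hom_subset G inst φ w⁻¹
  · rw [h2]; exact wordImage_hom_subset G inst e.symm.toMonoidHom (γ w)

theorem chiral_iff_gammaChiral {d : ℕ} (w : FreeGroup (Fin d))
    (γ : FreeGroup (Fin d) → FreeGroup (Fin d)) (hγ : IsAntiAut γ) :
    IsChiralWord w ↔ IsGammaChiralWord γ w := by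
  constructor
  · rintro ⟨G, inst, h⟩
    exact ⟨G, inst, by rwa [wordImage_gamma γ hγ]⟩
  · rintro ⟨G, inst, h⟩
    exact ⟨G, inst, by rwa [wordImage_gamma γ hγ] at h⟩
end

section
/- Let G be a finite group, w ∈ F_d, and γ, γ' two anti-automorphisms of G. Then (G, w) is weakly γ-chiral if and only if (G, w) is weakly γ'-chiral. That is, weak γ-chirality does not depend on the choice of anti-automorphism γ. -/
/-- The word map `G^d → G` associated to `w`. -/
def wordMap {d : ℕ} {G : Type*} [Group G] (w : FreeGroup (Fin d)) (g : Fin d → G) : G :=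
  (FreeGroup.lift g) w

/-- `(G, w)` is weakly `γ`-chiral: some `g ∈ G` has fibers of different cardinalities
under `w` and `w_γ`. -/
def WeaklyGammaChiral {d : ℕ} (G : Type*) [Group G] (w : FreeGroup (Fin d))
    (γ : G → G) : Prop :=
  ∃ g : G, Nat.card ((wordMap w) ⁻¹' {g}) ≠ Nat.card ((fun v => γ (wordMap w v)) ⁻¹' {g})

/-!
If `γ` and `γ'` are anti-automorphisms, then `γ⁻¹ ∘ γ'` is an automorphism. The fiber of `w_γ`
over `g` is the fiber of `w` over `γ⁻¹ g`, and an automorphism acting coordinatewise on `G^d`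
maps each fiber of `w` bijectively onto another one; hence the fibers of `w_γ` and `w_γ'` over
every `g` have the same cardinality.
-/

open MulOpposite

section

variable {d : ℕ} {G H : Type*} [Group G] [Group H]

theorem wordMap_comp {F : Type*} [FunLike F G H] [MonoidHomClass F G H]
    (w : FreeGroup (Fin d)) (φ : F) (v : Fin d → G) :
    wordMap w (φ ∘ v) = φ (wordMap w v) :=
  (FreeGroup.lift_unique ((φ : G →* H).comp (FreeGroup.lift v)) fun _ => by simp).symm

theorem card_wordMap_preimage_mulEquiv (w : FreeGroup (Fin d)) (φ : G ≃* H) (x : G) :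
    Nat.card (wordMap w ⁻¹' {φ x}) = Nat.card (wordMap w ⁻¹' {x}) :=
  Nat.card_congr <| ((MulEquiv.piCongrRight fun _ : Fin d => φ).toEquiv.subtypeEquiv
    fun v => by
      change wordMap w v = x ↔ wordMap w (φ ∘ v) = φ x
      rw [wordMap_comp]
      exact φ.injective.eq_iff.symm).symm

noncomputable def IsAntiAut.toMulEquiv {γ : G → G} (hγ : IsAntiAut γ) : G ≃* Gᵐᵒᵖ where
  toEquiv := (Equiv.ofBijective γ hγ.1).trans opEquiv
  map_mul' a b := by simp [hγ.2]

theorem IsAntiAut.preimage_comp_wordMap {γ : G → G} (hγ : IsAntiAut γ)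
    (w : FreeGroup (Fin d)) (g : G) :
    (fun v => γ (wordMap w v)) ⁻¹' {g} = wordMap w ⁻¹' {hγ.toMulEquiv.symm (op g)} := by
  ext v
  simp [IsAntiAut.toMulEquiv, Equiv.eq_symm_apply]

end

theorem weaklyChiral_indep_general {d : ℕ} (G : Type*) [Group G]
    (w : FreeGroup (Fin d)) (γ γ' : G → G) (hγ : IsAntiAut γ) (hγ' : IsAntiAut γ') :
    WeaklyGammaChiral G w γ ↔ WeaklyGammaChiral G w γ' := by
  have card_fiber_eq (g : G) : Nat.card ((fun v => γ (wordMap w v)) ⁻¹' {g}) =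
      Nat.card ((fun v => γ' (wordMap w v)) ⁻¹' {g}) := by
    rw [hγ.preimage_comp_wordMap, hγ'.preimage_comp_wordMap,
      ← card_wordMap_preimage_mulEquiv w (hγ'.toMulEquiv.trans hγ.toMulEquiv.symm)
        (hγ'.toMulEquiv.symm (op g))]
    simp
  exact exists_congr fun g => by rw [card_fiber_eq]

theorem weaklyChiral_indep {d : ℕ} (G : Type*) [Group G] [Finite G]
    (w : FreeGroup (Fin d)) (γ γ' : G → G) (hγ : IsAntiAut γ) (hγ' : IsAntiAut γ') :
    WeaklyGammaChiral G w γ ↔ WeaklyGammaChiral G w γ' :=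
  weaklyChiral_indep_general G w γ γ' hγ hγ'
end
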